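/- arXiv:0903.4462 — 3 statements merged into one kernel-verified Lean document; each statement's English description precedes it below -/
import Mathlib

section
/- Let G be a topological group with a subgroup H, acting continuously on topological spaces X and Y. Suppose there exist: a continuous G-equivariant map f : X → Y; a point y₀ ∈ Y with h • y₀ = y₀ for all h ∈ H; and a continuous homotopy F : X × [0,1] → Y with F(x,0) = f(x) and F(x,1) = y₀ for all x, such that F(h • x, t) = h • F(x,t) for all h ∈ H, x ∈ X, t ∈ [0,1]. Then there exists a continuous map K : X × (G ⧸ H) × [0,1] → Y such that: (i) K(g • x, g • z, t) = g • K(x, z, t) for all g ∈ G, x ∈ X, z ∈ G ⧸ H, t ∈ [0,1]; (ii) K(x, z, 0) = f(x) for all x, z; and (iii) there is a continuous map c : G ⧸ H → Y with K(x, z, 1) = c(z) for all x, z. -/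
/-!
Transport the `H`-equivariant homotopy `F` around by `G`: the map
`(x, g, t) ↦ g • F (g⁻¹ • x, t)` is `G`-equivariant, and `H`-equivariance of `F` makes it
constant on the cosets `g H`, so it descends to `X × (G ⧸ H) × [0,1]`. At `t = 0` it is
`g • f (g⁻¹ • x) = f x`, and at `t = 1` it is `g • y₀`, which depends only on `g H`.
-/

open QuotientGroup

theorem QuotientGroup.eq_of_leftRel_of_mul_mem {G γ : Type*} [Group G] {H : Subgroup G}
    {φ : G → γ} (hφ : ∀ g, ∀ h ∈ H, φ (g * h) = φ g) {a b : G} (hab : leftRel H a b) :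
    φ a = φ b := by
  rw [leftRel_apply] at hab
  rw [← hφ a _ hab, mul_inv_cancel_left]

section Descent

variable {G α β γ : Type*} [Group G] [TopologicalSpace G]
  [TopologicalSpace α] [TopologicalSpace β] [TopologicalSpace γ] (H : Subgroup G)

def ContinuousMap.quotientGroupLift (φ : C(G, γ)) (hφ : ∀ g, ∀ h ∈ H, φ (g * h) = φ g) :
    C(G ⧸ H, γ) where
  toFun z := Quotient.liftOn' z φ fun _ _ => eq_of_leftRel_of_mul_mem hφ
  continuous_toFun := φ.continuous.quotient_liftOn' _

@[simp]
theorem ContinuousMap.quotientGroupLift_mk (φ : C(G, γ)) (hφ : ∀ g, ∀ h ∈ H, φ (g * h) = φ g)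
    (g : G) : φ.quotientGroupLift H hφ g = φ g :=
  rfl

variable [SeparatelyContinuousMul G]

def ContinuousMap.quotientGroupLiftMiddle (φ : C(α × G × β, γ))
    (hφ : ∀ a g b, ∀ h ∈ H, φ (a, g * h, b) = φ (a, g, b)) : C(α × (G ⧸ H) × β, γ) where
  toFun p := Quotient.liftOn' p.2.1 (fun g => φ (p.1, g, p.2.2))
    fun _ _ => eq_of_leftRel_of_mul_mem (φ := fun g => φ (p.1, g, p.2.2)) (hφ p.1 · p.2.2)
  continuous_toFun := by
    have hq : IsOpenQuotientMap
        (Prod.map (id : α → α) (Prod.map (QuotientGroup.mk : G → G ⧸ H) (id : β → β))) :=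
      IsOpenQuotientMap.id.prodMap (isOpenQuotientMap_mk.prodMap IsOpenQuotientMap.id)
    exact hq.continuous_comp_iff.mp φ.continuous

@[simp]
theorem ContinuousMap.quotientGroupLiftMiddle_mk (φ : C(α × G × β, γ))
    (hφ : ∀ a g b, ∀ h ∈ H, φ (a, g * h, b) = φ (a, g, b)) (a : α) (g : G) (b : β) :
    φ.quotientGroupLiftMiddle H hφ (a, g, b) = φ (a, g, b) :=
  rfl

end Descent

section Conjugate

variable {G X Y T : Type*} [Group G] [TopologicalSpace G] [IsTopologicalGroup G]
  [TopologicalSpace X] [MulAction G X] [ContinuousSMul G X]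
  [TopologicalSpace Y] [MulAction G Y] [ContinuousSMul G Y] [TopologicalSpace T]

def ContinuousMap.conjugates (F : C(X × T, Y)) : C(X × G × T, Y) where
  toFun p := p.2.1 • F (p.2.1⁻¹ • p.1, p.2.2)
  continuous_toFun := by fun_prop

@[simp]
theorem ContinuousMap.conjugates_apply (F : C(X × T, Y)) (x : X) (g : G) (t : T) :
    F.conjugates (x, g, t) = g • F (g⁻¹ • x, t) :=
  rfl

theorem ContinuousMap.conjugates_smul (F : C(X × T, Y)) (g a : G) (x : X) (t : T) :
    F.conjugates (g • x, g * a, t) = g • F.conjugates (x, a, t) := by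
  simp [mul_smul]

theorem ContinuousMap.conjugates_mul_of_mem {H : Subgroup G} {F : C(X × T, Y)}
    (hF : ∀ h ∈ H, ∀ x t, F (h • x, t) = h • F (x, t)) (x : X) (g : G) (t : T) {h : G}
    (hh : h ∈ H) : F.conjugates (x, g * h, t) = F.conjugates (x, g, t) := by
  simp [mul_smul, ← hF h hh]

end Conjugate

/-- If a continuous `G`-equivariant map `f : X → Y` is `H`-equivariantly homotopic to a
constant map (at an `H`-fixed point `y₀`), then there is a `G`-equivariant map from the
join `X * (G ⧸ H)` to `Y`, encoded as a map on `X × (G ⧸ H) × [0,1]` whose `t = 0` end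
factors through the projection to `X` and whose `t = 1` end factors through the
projection to `G ⧸ H`. -/
theorem joinLemma {G X Y : Type*} [Group G] [TopologicalSpace G] [IsTopologicalGroup G]
    [TopologicalSpace X] [MulAction G X] [ContinuousSMul G X]
    [TopologicalSpace Y] [MulAction G Y] [ContinuousSMul G Y]
    (H : Subgroup G)
    (f : C(X, Y)) (hf : ∀ (g : G) (x : X), f (g • x) = g • f x)
    (y₀ : Y) (hy₀ : ∀ h ∈ H, h • y₀ = y₀)
    (F : C(X × unitInterval, Y))
    (hF0 : ∀ x : X, F (x, 0) = f x) (hF1 : ∀ x : X, F (x, 1) = y₀)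
    (hFequiv : ∀ h ∈ H, ∀ (x : X) (t : unitInterval), F (h • x, t) = h • F (x, t)) :
    ∃ K : C(X × (G ⧸ H) × unitInterval, Y),
      (∀ (g : G) (x : X) (z : G ⧸ H) (t : unitInterval),
        K (g • x, g • z, t) = g • K (x, z, t)) ∧
      (∀ (x : X) (z : G ⧸ H), K (x, z, 0) = f x) ∧
      (∃ c : C(G ⧸ H, Y), ∀ (x : X) (z : G ⧸ H), K (x, z, 1) = c z) := by
  let K := F.conjugates.quotientGroupLiftMiddle H fun x g t h hh =>
    F.conjugates_mul_of_mem hFequiv x g t hh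
  let c := (⟨(· • y₀), by fun_prop⟩ : C(G, Y)).quotientGroupLift H fun g h hh => by
    simp [mul_smul, hy₀ h hh]
  refine ⟨K, fun g x z t => ?_, fun x z => ?_, c, fun x z => ?_⟩ <;>
    induction z using QuotientGroup.induction_on
  · exact F.conjugates_smul g _ x t
  · simp [K, hF0, hf]
  · simp [K, c, hF1]
end

section
/- Let X and Y be topological spaces equipped with continuous involutions τ : X → X and σ : Y → Y. Suppose f : X → Y is a continuous map with f ∘ τ = σ ∘ f which is homotopic to a constant map. Then there exist a point y₀ ∈ Y and a continuous map K : X × [−1,1] → Y such that K(τ x, −t) = σ(K(x, t)) for all x ∈ X, t ∈ [−1,1], and K(x, 1) = y₀ for all x ∈ X. -/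
/- The map `K` is the homotopy run forwards on `t ≥ 0` and its `(τ, σ)`-conjugate run backwards
on `t ≤ 0`: `K (x, t) = H (t, x)` for `t ≥ 0` and `K (x, t) = σ (H (-t, τ x))` for `t ≤ 0`.
The two halves agree at `t = 0` because `σ (f (τ x)) = σ (σ (f x)) = f x`. -/

open Set

namespace ContinuousMap

variable {X Y : Type*} [TopologicalSpace X] [TopologicalSpace Y]

section

variable (τ : C(X, X)) (σ : C(Y, Y)) (G : C(X × ℝ, Y))

noncomputable def equivariantExtension (x : X) (t : ℝ) : Y :=
  if t ≤ 0 then σ (G (τ x, -t)) else G (x, t)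

variable {τ σ G}

theorem equivariantExtension_of_pos {x : X} {t : ℝ} (ht : 0 < t) :
    equivariantExtension τ σ G x t = G (x, t) :=
  if_neg ht.not_ge

theorem continuous_equivariantExtension (h₀ : ∀ x, σ (G (τ x, 0)) = G (x, 0)) :
    Continuous fun p : X × ℝ => equivariantExtension τ σ G p.1 p.2 := by
  refine Continuous.if_le (by fun_prop) G.continuous continuous_snd continuous_const ?_
  rintro ⟨x, t⟩ (rfl : t = 0)
  simpa using h₀ x

theorem equivariantExtension_neg (hτ : ∀ x, τ (τ x) = x) (hσ : ∀ y, σ (σ y) = y)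
    (h₀ : ∀ x, σ (G (τ x, 0)) = G (x, 0)) (x : X) (t : ℝ) :
    equivariantExtension τ σ G (τ x) (-t) = σ (equivariantExtension τ σ G x t) := by
  rcases lt_trichotomy t 0 with ht | rfl | ht
  · simp [equivariantExtension, ht.le, ht.not_ge, hσ]
  · simp [equivariantExtension, h₀ (τ x), hσ]
  · simp [equivariantExtension, ht.not_ge, ht.le, hτ]

end

noncomputable def Homotopy.extendProd {f₀ f₁ : C(X, Y)} (H : f₀.Homotopy f₁) : C(X × ℝ, Y) :=
  H.toContinuousMap.comp ⟨fun p => (projIcc 0 1 zero_le_one p.2, p.1), by fun_prop⟩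

end ContinuousMap

open ContinuousMap

/-- If a continuous map `f : X → Y` commuting with involutions `τ`, `σ` is homotopic to a
constant map, then there is a `ℤ/2`-equivariant map `K` from the unreduced suspension
`X × [-1,1]` of `X` (the join `X * ℤ/2`) to `Y` whose `t = 1` end is constant. -/
theorem involutionJoinLemma {X Y : Type*} [TopologicalSpace X] [TopologicalSpace Y]
    (τ : C(X, X)) (hτ : ∀ x, τ (τ x) = x)
    (σ : C(Y, Y)) (hσ : ∀ y, σ (σ y) = y)
    (f : C(X, Y)) (hf : ∀ x, f (τ x) = σ (f x))
    (hnull : ∃ y : Y, f.Homotopic (ContinuousMap.const X y)) :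
    ∃ (y₀ : Y) (K : C(X × (Set.Icc (-1 : ℝ) 1), Y)),
      (∀ (x : X) (t : Set.Icc (-1 : ℝ) 1),
        K (τ x, ⟨-(t : ℝ), ⟨by linarith [t.2.2], by linarith [t.2.1]⟩⟩) = σ (K (x, t))) ∧
      (∀ x : X, K (x, ⟨1, by norm_num⟩) = y₀) := by
  obtain ⟨y₀, ⟨H⟩⟩ := hnull
  have h₀ : ∀ x, σ (H.extendProd (τ x, 0)) = H.extendProd (x, 0) := fun x => by
    simp [Homotopy.extendProd, hf, hσ]
  refine ⟨y₀, ⟨fun p => equivariantExtension τ σ H.extendProd p.1 p.2,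
    (continuous_equivariantExtension h₀).comp
      (continuous_fst.prodMk (continuous_subtype_val.comp continuous_snd))⟩, ?_, fun x => ?_⟩
  · exact fun x t => equivariantExtension_neg hτ hσ h₀ x t
  · simp [equivariantExtension_of_pos one_pos, Homotopy.extendProd]
end

section
/- Let a ≥ 1 and l ≥ 1. If f : S^{a-1} → S^{l-1} is a continuous map satisfying f(−x) = −f(x) for all x ∈ S^{a-1}, and f is null-homotopic, then there exists a continuous map g : S^{a} → S^{l-1} satisfying g(−y) = −g(y) for all y ∈ S^{a}. -/
/-- The unit sphere `S^{n-1}` in `ℝ^n`. -/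
noncomputable abbrev rSphere (n : ℕ) : Type :=
  Metric.sphere (0 : EuclideanSpace ℝ (Fin n)) 1

/-!
Write a point of `S^a` as `(v, t)` with `v ∈ ℝ^a`, so that `v / ‖v‖` lies on the equator
`S^{a-1}` away from the poles. Run a null-homotopy `H` from `f` to a constant `y₀` on the
upper hemisphere, from `f` on the equator to `y₀` near the north pole, and its antipodal
reflection `-H(·, -x)` on the lower hemisphere. The two halves agree on the equator precisely
because `f` is odd, the result is constant (`±y₀`) near the poles where `v / ‖v‖` is undefined,
and it is odd by construction.
-/

open Metric Topology

section UnitSphere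

variable {E : Type*} [NormedAddCommGroup E] [NormedSpace ℝ E]

noncomputable def toUnitSphere (v : E) (hv : v ≠ 0) : sphere (0 : E) 1 :=
  ⟨‖v‖⁻¹ • v, by simp [norm_smul, hv]⟩

lemma toUnitSphere_neg (v : E) (hv : v ≠ 0) :
    toUnitSphere (-v) (neg_ne_zero.mpr hv) = -toUnitSphere v hv := by
  ext1; simp [toUnitSphere]

open Classical in
noncomputable def toUnitSphereOr (x₀ : sphere (0 : E) 1) (v : E) : sphere (0 : E) 1 :=
  if hv : v = 0 then x₀ else toUnitSphere v hv

lemma continuousAt_toUnitSphereOr (x₀ : sphere (0 : E) 1) {v : E} (hv : v ≠ 0) :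
    ContinuousAt (toUnitSphereOr x₀) v := by
  have hnormalize : (fun w => ‖w‖⁻¹ • w) =ᶠ[𝓝 v] fun w => (toUnitSphereOr x₀ w : E) := by
    filter_upwards [isOpen_ne.mem_nhds hv] with w hw
    simp [toUnitSphereOr, hw, toUnitSphere]
  rw [Topology.IsInducing.subtypeVal.continuousAt_iff]
  exact ((continuousAt_id.norm.inv₀ (norm_ne_zero_iff.mpr hv)).smul continuousAt_id).congr
    hnormalize

end UnitSphere

namespace ContinuousMap.Homotopy

variable {X Y : Type*} [TopologicalSpace X] [TopologicalSpace Y] [InvolutiveNeg X]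
  [InvolutiveNeg Y] {f : C(X, Y)} {y₀ : Y} (H : f.Homotopy (const X y₀))

noncomputable def oddExtend (s : ℝ) (x : X) : Y :=
  if 0 ≤ s then H.extend s x else -H.extend (-s) (-x)

lemma oddExtend_of_one_le {s : ℝ} (hs : 1 ≤ s) (x : X) : H.oddExtend s x = y₀ := by
  simp [oddExtend, zero_le_one.trans hs, H.extend_apply_of_one_le hs]

lemma oddExtend_of_le_neg_one {s : ℝ} (hs : s ≤ -1) (x : X) : H.oddExtend s x = -y₀ := by
  simp [oddExtend, (by linarith : ¬ 0 ≤ s), H.extend_apply_of_one_le (le_neg.mpr hs)]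

lemma continuous_oddExtend [ContinuousNeg X] [ContinuousNeg Y] (hf : ∀ x, f (-x) = -f x) :
    Continuous (Function.uncurry H.oddExtend) := by
  have hext : Continuous fun p : ℝ × X => H.extend p.1 p.2 :=
    H.continuous.comp ((continuous_projIcc.comp continuous_fst).prodMk continuous_snd)
  refine Continuous.if_le hext ?_ continuous_const continuous_fst fun p hp => ?_
  · exact (hext.comp (continuous_fst.neg.prodMk continuous_snd.neg)).neg
  · simp [← hp, hf]

lemma oddExtend_neg (hf : ∀ x, f (-x) = -f x) (s : ℝ) (x : X) :
    H.oddExtend (-s) (-x) = -H.oddExtend s x := by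
  rcases lt_trichotomy s 0 with hs | rfl | hs
  · simp [oddExtend, hs.le, hs.not_ge]
  · simp [oddExtend, hf]
  · simp [oddExtend, hs.le, hs.not_ge]

end ContinuousMap.Homotopy

section Suspension

variable {a : ℕ} {Y : Type*}

def sphereHeight (y : rSphere (a + 1)) : ℝ :=
  (y : EuclideanSpace ℝ (Fin (a + 1))) (Fin.last a)

def sphereBase (y : rSphere (a + 1)) : EuclideanSpace ℝ (Fin a) :=
  WithLp.toLp 2 (Fin.init (y : EuclideanSpace ℝ (Fin (a + 1))))

@[fun_prop]
lemma continuous_sphereHeight : Continuous (sphereHeight (a := a)) := by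
  unfold sphereHeight; fun_prop

@[fun_prop]
lemma continuous_sphereBase : Continuous (sphereBase (a := a)) := by
  unfold sphereBase; fun_prop

@[simp]
lemma sphereHeight_neg (y : rSphere (a + 1)) : sphereHeight (-y) = -sphereHeight y :=
  rfl

@[simp]
lemma sphereBase_neg (y : rSphere (a + 1)) : sphereBase (-y) = -sphereBase y :=
  rfl

lemma norm_sphereBase_sq_add_sphereHeight_sq (y : rSphere (a + 1)) :
    ‖sphereBase y‖ ^ 2 + sphereHeight y ^ 2 = 1 := by
  have hy := EuclideanSpace.real_norm_sq_eq (y : EuclideanSpace ℝ (Fin (a + 1)))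
  rw [mem_sphere_zero_iff_norm.mp y.2, Fin.sum_univ_castSucc] at hy
  simpa [sphereBase, sphereHeight, EuclideanSpace.real_norm_sq_eq, Fin.init] using hy.symm

lemma sphereHeight_eq_one_or_neg_one {y : rSphere (a + 1)} (hy : sphereBase y = 0) :
    sphereHeight y = 1 ∨ sphereHeight y = -1 := by
  simpa [hy] using norm_sphereBase_sq_add_sphereHeight_sq y

open Classical in
/-- Writing `y ∈ S^a` as `(v, t)` with `v ∈ ℝ^a`, the map `y ↦ F (2t) (v / ‖v‖)`; it is
continuous when `F s` is constant for `|s| ≥ 1`, which covers the poles `v = 0`. -/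
noncomputable def suspensionMap (F : ℝ → rSphere a → Y) (cₙ cₛ : Y) (y : rSphere (a + 1)) : Y :=
  if hy : sphereBase y = 0 then
    if 0 < sphereHeight y then cₙ else cₛ
  else F (2 * sphereHeight y) (toUnitSphere _ hy)

variable {F : ℝ → rSphere a → Y} {cₙ cₛ : Y}

lemma suspensionMap_of_half_lt (hF : ∀ s ≥ 1, ∀ x, F s x = cₙ) {y : rSphere (a + 1)}
    (hy : 1 / 2 < sphereHeight y) : suspensionMap F cₙ cₛ y = cₙ := by
  unfold suspensionMap
  split_ifs with h
  · rfl
  · linarith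
  · exact hF _ (by linarith) _

lemma suspensionMap_of_lt_neg_half (hF : ∀ s ≤ -1, ∀ x, F s x = cₛ) {y : rSphere (a + 1)}
    (hy : sphereHeight y < -(1 / 2)) : suspensionMap F cₙ cₛ y = cₛ := by
  unfold suspensionMap
  split_ifs with h
  · linarith
  · rfl
  · exact hF _ (by linarith) _

lemma continuous_suspensionMap [TopologicalSpace Y] (hF : Continuous (Function.uncurry F))
    (hFₙ : ∀ s ≥ 1, ∀ x, F s x = cₙ) (hFₛ : ∀ s ≤ -1, ∀ x, F s x = cₛ) :
    Continuous (suspensionMap F cₙ cₛ) := by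
  refine continuous_iff_continuousAt.mpr fun y => ?_
  by_cases hy : sphereBase y = 0
  · rcases sphereHeight_eq_one_or_neg_one hy with h | h
    · have hnear : ∀ᶠ z in 𝓝 y, 1 / 2 < sphereHeight z :=
        continuous_sphereHeight.continuousAt.eventually (lt_mem_nhds (by norm_num [h]))
      exact continuousAt_const.congr (hnear.mono fun z hz => (suspensionMap_of_half_lt hFₙ hz).symm)
    · have hnear : ∀ᶠ z in 𝓝 y, sphereHeight z < -(1 / 2) :=
        continuous_sphereHeight.continuousAt.eventually (gt_mem_nhds (by norm_num [h]))
      exact continuousAt_const.congr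
        (hnear.mono fun z hz => (suspensionMap_of_lt_neg_half hFₛ hz).symm)
  · have hnear : (fun z => F (2 * sphereHeight z)
        (toUnitSphereOr (toUnitSphere _ hy) (sphereBase z))) =ᶠ[𝓝 y] suspensionMap F cₙ cₛ := by
      filter_upwards [continuous_sphereBase.continuousAt.eventually_ne hy] with z hz
      simp [suspensionMap, toUnitSphereOr, hz]
    refine ContinuousAt.congr ?_ hnear
    exact hF.continuousAt.comp (f := fun z => (2 * sphereHeight z, _))
      ((continuous_sphereHeight.const_mul 2).continuousAt.prodMk
        ((continuousAt_toUnitSphereOr _ hy).comp continuous_sphereBase.continuousAt))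

lemma suspensionMap_neg [InvolutiveNeg Y] (hF : ∀ s x, F (-s) (-x) = -F s x) (hc : cₛ = -cₙ)
    (y : rSphere (a + 1)) : suspensionMap F cₙ cₛ (-y) = -suspensionMap F cₙ cₛ y := by
  by_cases hy : sphereBase y = 0
  · rcases sphereHeight_eq_one_or_neg_one hy with h | h <;> norm_num [suspensionMap, hy, h, hc]
  · rw [suspensionMap, suspensionMap, dif_neg hy]
    simp only [sphereBase_neg, sphereHeight_neg, mul_neg]
    rw [dif_neg (neg_ne_zero.mpr hy), toUnitSphere_neg, hF]

end Suspension

theorem equivariant_extension_of_nullhomotopic_general (a l : ℕ)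
    (f : C(rSphere a, rSphere l)) (hf : ∀ x, f (-x) = -f x)
    (hnull : ∃ y : rSphere l, f.Homotopic (ContinuousMap.const _ y)) :
    ∃ g : C(rSphere (a + 1), rSphere l), ∀ y, g (-y) = -g y := by
  obtain ⟨y₀, ⟨H⟩⟩ := hnull
  refine ⟨⟨suspensionMap H.oddExtend y₀ (-y₀), ?_⟩, suspensionMap_neg (H.oddExtend_neg hf) rfl⟩
  exact continuous_suspensionMap (H.continuous_oddExtend hf)
    (fun _ hs => H.oddExtend_of_one_le hs) (fun _ hs => H.oddExtend_of_le_neg_one hs)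

/-- If an antipodally equivariant map `f : S^{a-1} → S^{l-1}` is null-homotopic, then there
is an antipodally equivariant map `S^{a} → S^{l-1}`. -/
theorem equivariant_extension_of_nullhomotopic (a l : ℕ) (ha : 1 ≤ a) (hl : 1 ≤ l)
    (f : C(rSphere a, rSphere l)) (hf : ∀ x, f (-x) = -f x)
    (hnull : ∃ y : rSphere l, f.Homotopic (ContinuousMap.const _ y)) :
    ∃ g : C(rSphere (a + 1), rSphere l), ∀ y, g (-y) = -g y :=
  equivariant_extension_of_nullhomotopic_general a l f hf hnull
end
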